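/- The map α ↦ H(α, z*(α), 0) is nonincreasing on [0,∞): for all 0 ≤ α₁ ≤ α₂ one has H(α₂, z*(α₂), 0) ≤ H(α₁, z*(α₁), 0). Moreover, for every α ≥ 0 its derivative equals -R_A (1 + 2kαR_P + k²α²R_P(R_A+R_P)) / ( 2 (1 + αk(R_A+R_P))² ), which is ≤ 0. -/

import Mathlib

/-! Since `z ↦ H(α, z, 0)` is a concave quadratic maximised at `z*(α)`, `H(α, z*(α), 0)` is a
rational function of `α` near every `α ≥ 0`. Its derivative is the stated one, nonpositive on
`[0, ∞)`, and the mean value theorem gives antitonicity. -/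

/-- The map `H(α,z,γ)` of Section 4, with quadratic cost `k(a) = k a²/2`. -/
noncomputable def Hfun (R_A R_P k αAlow αAhigh : ℝ) (α z γ : ℝ) : ℝ :=
  z / k - z ^ 2 / (2 * k) - α / 2 * (R_A * z ^ 2 + R_P * (1 - z) ^ 2) - α / 2 * γ
    + sInf ((fun α' => α' * γ / 2) '' Set.Icc αAlow αAhigh)

/-- The optimal sensitivity `z*(α)`. -/
noncomputable def zStar (R_A R_P k α : ℝ) : ℝ :=
  (1 + k * α * R_P) / (1 + α * k * (R_A + R_P))

-- `max_z H(α, z, 0)`, attained at `z = z*(α)`.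
noncomputable def optimalValue (R_A R_P k α : ℝ) : ℝ :=
  (1 + k * α * R_P) ^ 2 / (2 * k * (1 + α * k * (R_A + R_P))) - α * R_P / 2

noncomputable def optimalValueDeriv (R_A R_P k α : ℝ) : ℝ :=
  -(R_A * (1 + 2 * k * α * R_P + k ^ 2 * α ^ 2 * R_P * (R_A + R_P)))
    / (2 * (1 + α * k * (R_A + R_P)) ^ 2)

section

variable {R_A R_P k : ℝ}

lemma sInf_image_mul_zero_div_two (s : Set ℝ) : sInf ((fun a : ℝ => a * 0 / 2) '' s) = 0 := by
  rcases s.eq_empty_or_nonempty with rfl | hs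
  · simp
  · simp [hs.image_const]

lemma Hfun_zStar_eq_optimalValue (αAlow αAhigh : ℝ) {α : ℝ} (hk : k ≠ 0)
    (hD : 1 + α * k * (R_A + R_P) ≠ 0) :
    Hfun R_A R_P k αAlow αAhigh α (zStar R_A R_P k α) 0 = optimalValue R_A R_P k α := by
  have hD' : 1 + k * α * (R_A + R_P) ≠ 0 := by rwa [mul_comm k α]
  simp only [Hfun, zStar, optimalValue, sInf_image_mul_zero_div_two]
  field_simp
  ring

lemma hasDerivAt_optimalValue {α : ℝ} (hk : k ≠ 0) (hD : 1 + α * k * (R_A + R_P) ≠ 0) :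
    HasDerivAt (optimalValue R_A R_P k) (optimalValueDeriv R_A R_P k α) α := by
  have hnum : HasDerivAt (fun β => (1 + k * β * R_P) ^ 2)
      (2 * (1 + k * α * R_P) * (k * R_P)) α := by
    have := ((((hasDerivAt_id α).const_mul k).mul_const R_P).const_add 1).fun_pow 2
    simpa [mul_comm, mul_assoc, mul_left_comm] using this
  have hden : HasDerivAt (fun β => 2 * k * (1 + β * k * (R_A + R_P)))
      (2 * k * (k * (R_A + R_P))) α := by
    simpa using ((((hasDerivAt_id α).mul_const k).mul_const (R_A + R_P)).const_add 1).const_mul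
      (2 * k)
  have hlin : HasDerivAt (fun β => β * R_P / 2) (R_P / 2) α := by
    simpa using ((hasDerivAt_id α).mul_const R_P).div_const 2
  have h : HasDerivAt (optimalValue R_A R_P k) _ α :=
    (hnum.fun_div hden (mul_ne_zero (by simpa using hk) hD)).fun_sub hlin
  convert h using 1
  have hD' : 1 + k * α * (R_A + R_P) ≠ 0 := by rwa [mul_comm k α]
  rw [optimalValueDeriv]
  field_simp
  ring

lemma optimalValueDeriv_nonpos {α : ℝ} (hRA : 0 ≤ R_A) (hRP : 0 ≤ R_P) (hk : 0 ≤ k)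
    (hα : 0 ≤ α) : optimalValueDeriv R_A R_P k α ≤ 0 := by
  unfold optimalValueDeriv
  have : 0 ≤ R_A * (1 + 2 * k * α * R_P + k ^ 2 * α ^ 2 * R_P * (R_A + R_P)) := by positivity
  exact div_nonpos_of_nonpos_of_nonneg (neg_nonpos.2 this) (by positivity)

lemma hasDerivAt_Hfun_zStar (αAlow αAhigh : ℝ) {α : ℝ} (hRA : 0 ≤ R_A) (hRP : 0 ≤ R_P)
    (hk : 0 < k) (hα : 0 ≤ α) :
    HasDerivAt (fun β => Hfun R_A R_P k αAlow αAhigh β (zStar R_A R_P k β) 0)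
      (optimalValueDeriv R_A R_P k α) α := by
  have hD : 0 < 1 + α * k * (R_A + R_P) := by positivity
  have hnear : ∀ᶠ β in nhds α, 0 < 1 + β * k * (R_A + R_P) :=
    (by fun_prop : Continuous fun β : ℝ => 1 + β * k * (R_A + R_P)).continuousAt.eventually
      (eventually_gt_nhds hD)
  refine (hasDerivAt_optimalValue hk.ne' hD.ne').congr_of_eventuallyEq ?_
  filter_upwards [hnear] with β hβ
  exact Hfun_zStar_eq_optimalValue αAlow αAhigh hk.ne' hβ.ne'

end

theorem H_zStar_antitone_general (R_A R_P k αAlow αAhigh : ℝ)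
    (hRA : 0 < R_A) (hRP : 0 < R_P) (hk : 0 < k) :
    (∀ α₁ α₂ : ℝ, 0 ≤ α₁ → α₁ ≤ α₂ →
      Hfun R_A R_P k αAlow αAhigh α₂ (zStar R_A R_P k α₂) 0
        ≤ Hfun R_A R_P k αAlow αAhigh α₁ (zStar R_A R_P k α₁) 0) ∧
    (∀ α : ℝ, 0 ≤ α →
      HasDerivAt (fun β => Hfun R_A R_P k αAlow αAhigh β (zStar R_A R_P k β) 0)
        (-(R_A * (1 + 2 * k * α * R_P + k ^ 2 * α ^ 2 * R_P * (R_A + R_P)))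
          / (2 * (1 + α * k * (R_A + R_P)) ^ 2)) α ∧
      -(R_A * (1 + 2 * k * α * R_P + k ^ 2 * α ^ 2 * R_P * (R_A + R_P)))
          / (2 * (1 + α * k * (R_A + R_P)) ^ 2) ≤ 0) := by
  have hderiv := fun α (hα : 0 ≤ α) =>
    hasDerivAt_Hfun_zStar αAlow αAhigh hRA.le hRP.le hk hα
  have hnonpos := fun α (hα : 0 ≤ α) => optimalValueDeriv_nonpos hRA.le hRP.le hk.le hα
  refine ⟨fun α₁ α₂ h₁ h₁₂ => ?_, fun α hα => ⟨hderiv α hα, hnonpos α hα⟩⟩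
  have hanti : AntitoneOn (fun β => Hfun R_A R_P k αAlow αAhigh β (zStar R_A R_P k β) 0)
      (Set.Ici 0) := by
    refine antitoneOn_of_hasDerivWithinAt_nonpos (convex_Ici 0)
      (fun x hx => (hderiv x hx).continuousAt.continuousWithinAt) (fun x hx => ?_)
      (fun x hx => hnonpos x (interior_subset hx))
    exact (hderiv x (interior_subset hx)).hasDerivWithinAt
  exact hanti h₁ (h₁.trans h₁₂) h₁₂

/-- The map `α ↦ H(α, z*(α), 0)` is nonincreasing on `[0,∞)`, and its derivative
equals `-R_A(1 + 2kαR_P + k²α²R_P(R_A+R_P)) / (2(1 + αk(R_A+R_P))²) ≤ 0`. -/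
theorem H_zStar_antitone (R_A R_P k αAlow αAhigh : ℝ)
    (hRA : 0 < R_A) (hRP : 0 < R_P) (hk : 0 < k)
    (hlow : 0 < αAlow) (hle : αAlow ≤ αAhigh) :
    (∀ α₁ α₂ : ℝ, 0 ≤ α₁ → α₁ ≤ α₂ →
      Hfun R_A R_P k αAlow αAhigh α₂ (zStar R_A R_P k α₂) 0
        ≤ Hfun R_A R_P k αAlow αAhigh α₁ (zStar R_A R_P k α₁) 0) ∧
    (∀ α : ℝ, 0 ≤ α →
      HasDerivAt (fun β => Hfun R_A R_P k αAlow αAhigh β (zStar R_A R_P k β) 0)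
        (-(R_A * (1 + 2 * k * α * R_P + k ^ 2 * α ^ 2 * R_P * (R_A + R_P)))
          / (2 * (1 + α * k * (R_A + R_P)) ^ 2)) α ∧
      -(R_A * (1 + 2 * k * α * R_P + k ^ 2 * α ^ 2 * R_P * (R_A + R_P)))
          / (2 * (1 + α * k * (R_A + R_P)) ^ 2) ≤ 0) :=
  H_zStar_antitone_general R_A R_P k αAlow αAhigh hRA hRP hk
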